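/- Simulation theorem: Let B be a deterministic decision tree on inputs from ({0,1}^m)^t, and let Q be a consistent probability distribution over pairs (μ0, μ1) of distributions on {0,1}^m. For every z ∈ {0,1}^t and every node v of B, the probability that the query process P(B,Q) run on z reaches v equals the probability that the computation of B on a random input x sampled from γ_z(Q) reaches v. -/

import Mathlib

open Finset

inductive DTree (ι : Type) (S : Type) where
  | leaf : S → DTree ι S
  | node : ι → DTree ι S → DTree ι S → DTree ι S

namespace DTree

/-- Evaluate a deterministic decision tree on an input. -/
def eval {ι S : Type} : DTree ι S → (ι → Bool) → S
  | leaf s, _ => s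
  | node i t0 t1, x => if x i then t1.eval x else t0.eval x

/-- The depth (worst-case number of queries) of a decision tree. -/
def depth {ι S : Type} : DTree ι S → ℕ
  | leaf _ => 0
  | node _ t0 t1 => max t0.depth t1.depth + 1

/-- The number of queries a decision tree makes on a given input. -/
def queries {ι S : Type} : DTree ι S → (ι → Bool) → ℕ
  | leaf _, _ => 0
  | node i t0 t1, x => (if x i then t1.queries x else t0.queries x) + 1

end DTree

/-- A probability distribution on a finite type, as a nonnegative real weight function summing to 1. -/
def IsDist {γ : Type} [Fintype γ] (μ : γ → ℝ) : Prop :=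
  (∀ x, 0 ≤ μ x) ∧ ∑ x, μ x = 1

/-- The support of `μ` is contained in `A`. -/
def SuppIn {γ : Type} [Fintype γ] (μ : γ → ℝ) (A : Set γ) : Prop :=
  ∀ x, μ x ≠ 0 → x ∈ A

/-- `g⁻¹(b)` for a partial Boolean function given as a relation. -/
def preim {m : ℕ} (g : Set ((Fin m → Bool) × Bool)) (b : Bool) : Set (Fin m → Bool) :=
  {x | (x, b) ∈ g ∧ (x, !b) ∉ g}

/-- `x` is a valid input of the partial Boolean function `g`. -/
def ValidIn {m : ℕ} (g : Set ((Fin m → Bool) × Bool)) (x : Fin m → Bool) : Prop :=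
  x ∈ preim g false ∨ x ∈ preim g true

/-- A deterministic decision tree computes the partial Boolean function `g`. -/
def Computes {m : ℕ} (T : DTree (Fin m) Bool) (g : Set ((Fin m → Bool) × Bool)) : Prop :=
  ∀ b : Bool, ∀ x ∈ preim g b, T.eval x = b

/-- The paper's convention for partial Boolean functions: for every invalid input `y`, both
`(y,0)` and `(y,1)` belong to the relation (so that any output is accepted on invalid inputs).
`totalize g` adds all such pairs; it has the same valid inputs and the same `g⁻¹(b)` as `g`. -/
def totalize {m : ℕ} (g : Set ((Fin m → Bool) × Bool)) : Set ((Fin m → Bool) × Bool) :=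
  {p | p ∈ g ∨ ¬ ValidIn g p.1}

/-- Probability that coordinate `j` equals `b` under `μ`. -/
noncomputable def prb {m : ℕ} (μ : (Fin m → Bool) → ℝ) (j : Fin m) (b : Bool) : ℝ :=
  ∑ x, if x j = b then μ x else 0

/-- `μ` conditioned on coordinate `j` being equal to `b` (zero if the event has probability zero). -/
noncomputable def condD {m : ℕ} (μ : (Fin m → Bool) → ℝ) (j : Fin m) (b : Bool) :
    (Fin m → Bool) → ℝ :=
  fun x => if x j = b then μ x / prb μ j b else 0

/-- `chiW T μ0 μ1 = (Σ_v Δ(v)R(v), Σ_v d_T(v)Δ(v)R(v))`, where at a node `v` querying `j`,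
`p_b(v)` is the probability that the queried bit is `0` under `μ_b` conditioned on reaching `v`,
`Δ(v) = |p_0(v) - p_1(v)|`, and `R(v)` is the product along the path to `v` of
`min` of the two conditional transition probabilities; the depth of the root is 1. -/
noncomputable def chiW {m : ℕ} {S : Type} :
    DTree (Fin m) S → ((Fin m → Bool) → ℝ) → ((Fin m → Bool) → ℝ) → ℝ × ℝ
  | .leaf _, _, _ => (0, 0)
  | .node j t0 t1, μ0, μ1 =>
    let p0 := prb μ0 j false
    let p1 := prb μ1 j false
    let r0 := chiW t0 (condD μ0 j false) (condD μ1 j false)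
    let r1 := chiW t1 (condD μ0 j true) (condD μ1 j true)
    (|p0 - p1| + min p0 p1 * r0.1 + min (1 - p0) (1 - p1) * r1.1,
     |p0 - p1| + min p0 p1 * r0.1 + min (1 - p0) (1 - p1) * r1.1
       + min p0 p1 * r0.2 + min (1 - p0) (1 - p1) * r1.2)

/-- The conflict complexity `χ(T,(μ0,μ1)) = Σ_v d_T(v)·Δ(v)·R(v)` of a tree with respect to a
pair of distributions. -/
noncomputable def chi {m : ℕ} {S : Type} (T : DTree (Fin m) S)
    (μ0 μ1 : (Fin m → Bool) → ℝ) : ℝ :=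
  (chiW T μ0 μ1).2

/-- `(T,(μ0,μ1))` is full: `Σ_v Δ(v)·R(v) = 1`. -/
def FullPair {m : ℕ} {S : Type} (T : DTree (Fin m) S)
    (μ0 μ1 : (Fin m → Bool) → ℝ) : Prop :=
  (chiW T μ0 μ1).1 = 1

/-- The state of the query process for one block: either the corresponding bit of `z` has not
been queried yet (and we keep the pair of conditioned distributions), or it has been queried
(and we keep the single conditioned distribution for the actual value of the bit). -/
inductive BState (m : ℕ) where
  | unq : ((Fin m → Bool) → ℝ) → ((Fin m → Bool) → ℝ) → BState m
  | qd : ((Fin m → Bool) → ℝ) → BState m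

/-- `procProb z p B st`: the probability that the query process `P(B,Q)` run on `z`, started at
the root of `B` with per-block states `st`, follows the path `p` (sequence of query answers). -/
noncomputable def procProb {t m : ℕ} {S : Type} (z : Fin t → Bool) :
    List Bool → DTree (Fin t × Fin m) S → (Fin t → BState m) → ℝ
  | [], _, _ => 1
  | _ :: _, .leaf _, _ => 0
  | b :: p, .node q t0 t1, st =>
    match st q.1 with
    | .qd μ =>
        prb μ q.2 b *
          procProb z p (if b then t1 else t0) (Function.update st q.1 (.qd (condD μ q.2 b)))
    | .unq μ0 μ1 =>
        let p0 := prb μ0 q.2 false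
        let p1 := prb μ1 q.2 false
        let pz := if z q.1 then p1 else p0
        (if b then 1 - max p0 p1 else min p0 p1) *
          procProb z p (if b then t1 else t0)
            (Function.update st q.1 (.unq (condD μ0 q.2 b) (condD μ1 q.2 b)))
        + (if b then max p0 p1 - pz else pz - min p0 p1) *
          procProb z p (if b then t1 else t0)
            (Function.update st q.1 (.qd (condD (if z q.1 then μ1 else μ0) q.2 b)))

/-- `followB p B x = true` iff the computation of `B` on input `x` follows the path `p`. -/
def followB {ι : Type} {S : Type} : List Bool → DTree ι S → (ι → Bool) → Bool
  | [], _, _ => true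
  | _ :: _, .leaf _, _ => false
  | b :: p, .node q t0 t1, x => (x q == b) && followB p (if b then t1 else t0) x

section SimAux

variable {m : ℕ}

lemma prb_nonneg {μ : (Fin m → Bool) → ℝ} (hμ : ∀ x, 0 ≤ μ x) (j : Fin m) (b : Bool) :
    0 ≤ prb μ j b :=
  Finset.sum_nonneg fun x _ => by by_cases h : x j = b <;> simp [prb, h, hμ x]

lemma prb_false_add_true {μ : (Fin m → Bool) → ℝ} (hμ : IsDist μ) (j : Fin m) :
    prb μ j false + prb μ j true = 1 := by
  rw [prb, prb, ← Finset.sum_add_distrib, ← hμ.2]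
  refine Finset.sum_congr rfl fun x _ => ?_
  cases h : x j <;> simp [h]

lemma prb_le_one {μ : (Fin m → Bool) → ℝ} (hμ : IsDist μ) (j : Fin m) (b : Bool) :
    prb μ j b ≤ 1 := by
  have h := prb_false_add_true hμ j
  have h0 := prb_nonneg hμ.1 j false
  have h1 := prb_nonneg hμ.1 j true
  cases b <;> linarith

lemma condD_isDist {μ : (Fin m → Bool) → ℝ} (hμ : IsDist μ) (j : Fin m) (b : Bool)
    (h : prb μ j b ≠ 0) : IsDist (condD μ j b) := by
  constructor
  · intro x
    by_cases hx : x j = b <;>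
      simp [condD, hx, div_nonneg (hμ.1 x) (prb_nonneg hμ.1 j b)]
  · have : ∑ x, condD μ j b x = (∑ x, if x j = b then μ x else 0) / prb μ j b := by
      rw [Finset.sum_div]
      refine Finset.sum_congr rfl fun x _ => ?_
      by_cases hx : x j = b <;> simp [condD, hx]
    rw [this]
    exact div_self (by simpa [prb] using h)

lemma prb_mul_condD {μ : (Fin m → Bool) → ℝ} (hμ : ∀ x, 0 ≤ μ x) (j : Fin m) (b : Bool)
    (x : Fin m → Bool) :
    prb μ j b * condD μ j b x = if x j = b then μ x else 0 := by
  by_cases hp : prb μ j b = 0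
  · rw [hp, zero_mul]
    by_cases hx : x j = b
    · simp only [hx, if_true]
      have := (Finset.sum_eq_zero_iff_of_nonneg (fun y _ => by
        by_cases hy : y j = b <;> simp [hy, hμ y] : ∀ y ∈ Finset.univ, 0 ≤ if y j = b then μ y else 0)).1 (by simpa [prb] using hp) x (Finset.mem_univ x)
      simpa [hx] using this.symm
    · simp [hx]
  · by_cases hx : x j = b
    · simp [condD, hx, mul_div_cancel₀ _ hp]
    · simp [condD, hx]

end SimAux

section SimAux2

variable {m : ℕ}

/-- Effective distribution of a block state. -/
def effD (zb : Bool) : BState m → ((Fin m → Bool) → ℝ)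
  | .unq μ0 μ1 => if zb then μ1 else μ0
  | .qd μ => μ

/-- A block state is good if its constituent measures are distributions. -/
def GoodS : BState m → Prop
  | .unq μ0 μ1 => IsDist μ0 ∧ IsDist μ1
  | .qd μ => IsDist μ

lemma effD_isDist {zb : Bool} {s : BState m} (h : GoodS s) : IsDist (effD zb s) := by
  cases s with
  | qd μ => exact h
  | unq μ0 μ1 => cases zb <;> simp [effD] <;> [exact h.1; exact h.2]

/-- One simulation step: given an answer `b` at coordinate `j`, the two successor
(weight, state) pairs of a block state. -/
noncomputable def stepW (zb : Bool) (j : Fin m) (b : Bool) : BState m → Bool → ℝ × BState m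
  | .qd μ, false => (prb μ j b, .qd (condD μ j b))
  | .qd μ, true => (0, .qd (condD μ j b))
  | .unq μ0 μ1, false =>
      (if b then 1 - max (prb μ0 j false) (prb μ1 j false)
        else min (prb μ0 j false) (prb μ1 j false),
       .unq (condD μ0 j b) (condD μ1 j b))
  | .unq μ0 μ1, true =>
      (if b then max (prb μ0 j false) (prb μ1 j false) -
          (if zb then prb μ1 j false else prb μ0 j false)
        else (if zb then prb μ1 j false else prb μ0 j false) -
          min (prb μ0 j false) (prb μ1 j false),
       .qd (condD (if zb then μ1 else μ0) j b))

lemma stepW_nonneg {zb : Bool} {j : Fin m} {b : Bool} {s : BState m} (hs : GoodS s)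
    (β : Bool) : 0 ≤ (stepW zb j b s β).1 := by
  cases s with
  | qd μ =>
    cases β
    · exact prb_nonneg hs.1 j b
    · exact le_refl 0
  | unq μ0 μ1 =>
    obtain ⟨h0, h1⟩ := hs
    have a0 := prb_nonneg h0.1 j false
    have a1 := prb_nonneg h1.1 j false
    have b0 := prb_le_one h0 j false
    have b1 := prb_le_one h1 j false
    cases β <;> cases b <;> cases zb <;>
      simp [stepW, le_max_iff, min_le_iff, sub_nonneg, le_min_iff, max_le_iff] <;> tauto

lemma stepW_good {zb : Bool} {j : Fin m} {b : Bool} {s : BState m} (hs : GoodS s)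
    (β : Bool) (hne : (stepW zb j b s β).1 ≠ 0) : GoodS (stepW zb j b s β).2 := by
  cases s with
  | qd μ =>
    cases β
    · exact condD_isDist hs j b (by simpa [stepW] using hne)
    · simp [stepW] at hne
  | unq μ0 μ1 =>
    obtain ⟨h0, h1⟩ := hs
    have a0 := prb_nonneg h0.1 j false
    have a1 := prb_nonneg h1.1 j false
    have b0 := prb_le_one h0 j false
    have b1 := prb_le_one h1 j false
    have s0 := prb_false_add_true h0 j
    have s1 := prb_false_add_true h1 j
    set p0 := prb μ0 j false with hp0
    set p1 := prb μ1 j false with hp1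
    cases β
    · cases b
      · simp only [stepW, if_neg Bool.false_ne_true] at hne ⊢
        have hmin : 0 < min p0 p1 := lt_of_le_of_ne (le_min a0 a1) (Ne.symm hne)
        exact ⟨condD_isDist h0 j false (by rw [← hp0]; nlinarith [min_le_left p0 p1]),
          condD_isDist h1 j false (by rw [← hp1]; nlinarith [min_le_right p0 p1])⟩
      · simp only [stepW, if_pos rfl] at hne ⊢
        have hmax : max p0 p1 < 1 :=
          lt_of_le_of_ne (max_le b0 b1) (fun h => hne (by rw [if_pos trivial, ← hp0, ← hp1, h, sub_self]))
        have e0 : prb μ0 j true = 1 - p0 := by linarith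
        have e1 : prb μ1 j true = 1 - p1 := by linarith
        exact ⟨condD_isDist h0 j true (by rw [e0]; nlinarith [le_max_left p0 p1]),
          condD_isDist h1 j true (by rw [e1]; nlinarith [le_max_right p0 p1])⟩
    · have hz : GoodS (BState.qd (if zb then μ1 else μ0)) := by cases zb <;> simpa [GoodS]
      have az : 0 ≤ prb (if zb then μ1 else μ0) j false := prb_nonneg hz.1 j false
      have bz : prb (if zb then μ1 else μ0) j false ≤ 1 := prb_le_one hz j false
      have sz := prb_false_add_true hz j
      have epz : prb (if zb then μ1 else μ0) j false = if zb then p1 else p0 := by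
        cases zb <;> simp [hp0, hp1]
      set pz := prb (if zb then μ1 else μ0) j false with hpz
      cases b
      · simp only [stepW, if_neg Bool.false_ne_true, ← epz] at hne ⊢
        refine condD_isDist hz j false ?_
        have : min p0 p1 < pz := lt_of_le_of_ne (by rw [epz]; cases zb <;>
          simp [min_le_left, min_le_right]) (fun h => hne (by rw [← hp0, ← hp1, ← epz, ← h, sub_self]))
        rw [← hpz]
        nlinarith [le_min a0 a1]
      · simp only [stepW, if_pos rfl, ← epz] at hne ⊢
        refine condD_isDist hz j true ?_
        have hle : pz ≤ max p0 p1 := by rw [epz]; cases zb <;>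
          simp [le_max_left, le_max_right]
        have : pz < max p0 p1 := lt_of_le_of_ne hle (fun h => hne (by rw [if_pos trivial, ← hp0, ← hp1, ← epz, h, sub_self]))
        have : pz < 1 := lt_of_lt_of_le this (max_le b0 b1)
        intro hcon
        rw [← hpz] at *
        nlinarith

end SimAux2

section SimAux3

variable {m : ℕ}

lemma stepW_eff {zb : Bool} {j : Fin m} {b : Bool} {s : BState m} (hs : GoodS s)
    (y : Fin m → Bool) :
    ∑ β : Bool, (stepW zb j b s β).1 * effD zb ((stepW zb j b s β).2) y =
      if y j = b then effD zb s y else 0 := by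
  rw [Fintype.sum_bool]
  cases s with
  | qd μ =>
    simp only [stepW, effD, zero_mul, zero_add]
    exact prb_mul_condD hs.1 j b y
  | unq μ0 μ1 =>
    obtain ⟨h0, h1⟩ := hs
    have e0 := prb_false_add_true h0 j
    have e1 := prb_false_add_true h1 j
    cases zb
    · cases b
      · simp only [stepW, effD, Bool.false_eq_true, if_false]
        rw [← prb_mul_condD h0.1 j false y]
        ring
      · simp only [stepW, effD, Bool.false_eq_true, if_false, if_true]
        rw [← prb_mul_condD h0.1 j true y,
          show prb μ0 j true = 1 - prb μ0 j false by linarith]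
        ring
    · cases b
      · simp only [stepW, effD, Bool.false_eq_true, if_false, if_true]
        rw [← prb_mul_condD h1.1 j false y]
        ring
      · simp only [stepW, effD, if_true]
        rw [← prb_mul_condD h1.1 j true y,
          show prb μ1 j true = 1 - prb μ1 j false by linarith]
        ring

lemma stepW_proc {t : ℕ} {S : Type} (z : Fin t → Bool) (p' : List Bool) (b : Bool)
    (t0 t1 : DTree (Fin t × Fin m) S) (i0 : Fin t) (j : Fin m) (st : Fin t → BState m) :
    procProb z (b :: p') (.node (i0, j) t0 t1) st =
      ∑ β : Bool, (stepW (z i0) j b (st i0) β).1 *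
        procProb z p' (if b then t1 else t0)
          (Function.update st i0 (stepW (z i0) j b (st i0) β).2) := by
  rw [Fintype.sum_bool]
  cases h : st i0 with
  | qd μ =>
    simp only [procProb, h, stepW, zero_mul, zero_add]
  | unq μ0 μ1 =>
    simp only [procProb, h, stepW]
    ring

end SimAux3

section SimAux4

/-- Next-step weights for the generalized family. -/
noncomputable def wNext {t m : ℕ} (z : Fin t → Bool) (i0 : Fin t) (j : Fin m) (b : Bool)
    (κ : Fin t → Type) (w : ∀ i, κ i → ℝ) (s : ∀ i, κ i → BState m) :
    ∀ i, κ i × Bool → ℝ := fun i c =>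
  if i = i0 then (if w i c.1 = 0 then 0 else w i c.1 * (stepW (z i) j b (s i c.1) c.2).1)
  else w i c.1 / 2

/-- Next-step states for the generalized family. -/
noncomputable def sNext {t m : ℕ} (z : Fin t → Bool) (i0 : Fin t) (j : Fin m) (b : Bool)
    (κ : Fin t → Type) (s : ∀ i, κ i → BState m) :
    ∀ i, κ i × Bool → BState m := fun i c =>
  if i = i0 then (stepW (z i) j b (s i c.1) c.2).2 else s i c.1

lemma sum_prod_curry {t m : ℕ} (F : ∀ _ : Fin t, (Fin m → Bool) → ℝ) :
    ∑ x : Fin t × Fin m → Bool, ∏ i, F i (fun j => x (i, j)) =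
      ∏ i, ∑ y : Fin m → Bool, F i y := by
  rw [Fintype.prod_sum]
  exact Fintype.sum_equiv (Equiv.curry _ _ _) _ _ fun x => rfl

lemma key {t m : ℕ} {S : Type} (z : Fin t → Bool) (p : List Bool)
    (B : DTree (Fin t × Fin m) S) (κ : Fin t → Type) [∀ i, Fintype (κ i)]
    (w : ∀ i, κ i → ℝ) (s : ∀ i, κ i → BState m)
    (hw : ∀ i c, 0 ≤ w i c) (hg : ∀ i c, w i c ≠ 0 → GoodS (s i c)) :
    (∑ cv : ∀ i, κ i, (∏ i, w i (cv i)) * procProb z p B fun i => s i (cv i)) =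
      ∑ x : Fin t × Fin m → Bool,
        (∏ i, ∑ c, w i c * effD (z i) (s i c) fun j => x (i, j)) *
          (if followB p B x then 1 else 0) := by
  classical
  match p, B with
  | [], B =>
    simp only [procProb, followB, if_true, mul_one]
    rw [← Fintype.prod_sum, sum_prod_curry (fun i y => ∑ c, w i c * effD (z i) (s i c) y)]
    refine Finset.prod_congr rfl fun i _ => ?_
    rw [Finset.sum_comm]
    refine Finset.sum_congr rfl fun c _ => ?_
    by_cases hc : w i c = 0
    · simp [hc]
    · rw [← Finset.mul_sum, (effD_isDist (hg i c hc)).2, mul_one]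
  | b :: p', .leaf o =>
    simp [procProb, followB]
  | b :: p', .node q t0 t1 =>
    obtain ⟨i0, j⟩ := q
    set T' := if b then t1 else t0 with hT'
    set w' := wNext z i0 j b κ w s with hw'def
    set s' := sNext z i0 j b κ s with hs'def
    have hww' : ∀ i (c : κ i × Bool), 0 ≤ w' i c := by
      intro i c
      by_cases h : i = i0
      · subst h
        simp only [hw'def, wNext, if_pos rfl]
        by_cases hc : w i c.1 = 0
        · simp [hc]
        · rw [if_neg hc]
          exact mul_nonneg (hw i c.1) (stepW_nonneg (hg i c.1 hc) c.2)
      · simp only [hw'def, wNext, if_neg h]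
        exact div_nonneg (hw i c.1) (by norm_num)
    have hgg' : ∀ i (c : κ i × Bool), w' i c ≠ 0 → GoodS (s' i c) := by
      intro i c hne
      by_cases h : i = i0
      · subst h
        simp only [hw'def, wNext, if_pos rfl] at hne
        simp only [hs'def, sNext, if_pos rfl]
        by_cases hc : w i c.1 = 0
        · exact absurd (by simp [hc]) hne
        · rw [if_neg hc] at hne
          exact stepW_good (hg i c.1 hc) c.2 fun h0 => hne (by simp [h0])
      · simp only [hs'def, sNext, if_neg h]
        simp only [hw'def, wNext, if_neg h] at hne
        exact hg i c.1 fun h0 => hne (by rw [h0]; norm_num)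
    have IH := key z p' T' (fun i => κ i × Bool) w' s' hww' hgg'
    -- Step A : left-hand sides agree
    have hA : (∑ cv : ∀ i, κ i,
          (∏ i, w i (cv i)) * procProb z (b :: p') (.node (i0, j) t0 t1) fun i => s i (cv i))
        = ∑ cv' : ∀ i, κ i × Bool,
            (∏ i, w' i (cv' i)) * procProb z p' T' fun i => s' i (cv' i) := by
      have h1 : (∑ cv' : ∀ i, κ i × Bool,
            (∏ i, w' i (cv' i)) * procProb z p' T' fun i => s' i (cv' i))
          = ∑ pr : (∀ i, κ i) × (Fin t → Bool),
              (∏ i, w' i (pr.1 i, pr.2 i)) * procProb z p' T' fun i => s' i (pr.1 i, pr.2 i) :=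
        Fintype.sum_equiv
          ⟨fun f => (fun i => (f i).1, fun i => (f i).2), fun pr i => (pr.1 i, pr.2 i),
            fun f => rfl, fun pr => rfl⟩ _ _ fun cv' => rfl
      rw [h1, Fintype.sum_prod_type]
      refine Finset.sum_congr rfl fun cv _ => ?_
      have hst : ∀ g : Fin t → Bool,
          (fun i => s' i (cv i, g i)) = Function.update (fun i => s i (cv i)) i0
            ((stepW (z i0) j b (s i0 (cv i0)) (g i0)).2) := by
        intro g
        funext i
        by_cases h : i = i0
        · subst h
          simp [hs'def, sNext]
        · simp [hs'def, sNext, h, Function.update_of_ne h]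
      rw [stepW_proc z p' b t0 t1 i0 j (fun i => s i (cv i)), ← hT']
      have key_g : ∀ g : Fin t → Bool,
          (∏ i, w' i (cv i, g i)) * procProb z p' T' (fun i => s' i (cv i, g i))
            = ∏ i, (w' i (cv i, g i) *
                (if i = i0 then procProb z p' T' (Function.update (fun i' => s i' (cv i'))
                  i0 ((stepW (z i0) j b (s i0 (cv i0)) (g i)).2)) else 1)) := by
        intro g
        rw [Finset.prod_mul_distrib]
        congr 1
        rw [Finset.prod_ite_eq' Finset.univ i0
          (fun i => procProb z p' T' (Function.update (fun i' => s i' (cv i'))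
            i0 ((stepW (z i0) j b (s i0 (cv i0)) (g i)).2)))]
        rw [if_pos (Finset.mem_univ i0), hst g]
      rw [Finset.sum_congr rfl fun g _ => key_g g,
        ← Fintype.prod_sum (κ := fun _ : Fin t => Bool)
          (fun i β => w' i (cv i, β) *
            (if i = i0 then procProb z p' T' (Function.update (fun i' => s i' (cv i'))
              i0 ((stepW (z i0) j b (s i0 (cv i0)) β).2)) else 1))]
      -- now : (∏ w) * (∑ β, step.1 * P β) = ∏ i, ∑ β, h i β
      have hfac : ∀ i, i ≠ i0 → (∑ β : Bool, w' i (cv i, β) *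
          (if i = i0 then procProb z p' T' (Function.update (fun i' => s i' (cv i'))
            i0 ((stepW (z i0) j b (s i0 (cv i0)) β).2)) else 1)) = w i (cv i) := by
        intro i h
        rw [Fintype.sum_bool]
        simp only [hw'def, wNext, if_neg h]
        ring
      have hfac0 : (∑ β : Bool, w' i0 (cv i0, β) *
          (if i0 = i0 then procProb z p' T' (Function.update (fun i' => s i' (cv i'))
            i0 ((stepW (z i0) j b (s i0 (cv i0)) β).2)) else 1))
          = (if w i0 (cv i0) = 0 then 0 else w i0 (cv i0) *
              ∑ β : Bool, (stepW (z i0) j b (s i0 (cv i0)) β).1 *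
                procProb z p' T' (Function.update (fun i' => s i' (cv i'))
                  i0 ((stepW (z i0) j b (s i0 (cv i0)) β).2))) := by
        by_cases hc : w i0 (cv i0) = 0
        · simp [hw'def, wNext, hc]
        · rw [if_neg hc, Finset.mul_sum, Fintype.sum_bool, Fintype.sum_bool]
          simp only [hw'def, wNext, if_pos rfl, if_neg hc]
          simp only [eq_self_iff_true, if_true]
          ring
      rw [← Finset.mul_prod_erase Finset.univ
          (fun i => ∑ β : Bool, w' i (cv i, β) *
            (if i = i0 then procProb z p' T' (Function.update (fun i' => s i' (cv i'))
              i0 ((stepW (z i0) j b (s i0 (cv i0)) β).2)) else 1)) (Finset.mem_univ i0),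
        ← Finset.mul_prod_erase Finset.univ (fun i => w i (cv i)) (Finset.mem_univ i0),
        hfac0, Finset.prod_congr rfl (fun i hi => hfac i (Finset.ne_of_mem_erase hi))]
      by_cases hc : w i0 (cv i0) = 0
      · simp [hc]
      · rw [if_neg hc]
        ring
    rw [hA, IH]
    -- Step B : right-hand sides agree
    refine Finset.sum_congr rfl fun x _ => ?_
    have hfol : (if followB (b :: p') (DTree.node (i0, j) t0 t1) x then (1:ℝ) else 0)
        = (if x (i0, j) = b then (1:ℝ) else 0) *
            (if followB p' T' x then (1:ℝ) else 0) := by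
      simp only [followB, ← hT']
      by_cases h : x (i0, j) = b <;> simp [h]
    have hD : ∀ i, i ≠ i0 →
        (∑ c : κ i × Bool, w' i c * effD (z i) (s' i c) fun j' => x (i, j'))
          = ∑ c, w i c * effD (z i) (s i c) fun j' => x (i, j') := by
      intro i h
      rw [Fintype.sum_prod_type]
      refine Finset.sum_congr rfl fun c _ => ?_
      rw [Fintype.sum_bool]
      simp only [hw'def, wNext, hs'def, sNext, if_neg h]
      ring
    have hD0 : (∑ c : κ i0 × Bool, w' i0 c * effD (z i0) (s' i0 c) fun j' => x (i0, j'))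
        = (if x (i0, j) = b then (1:ℝ) else 0) *
            ∑ c, w i0 c * effD (z i0) (s i0 c) fun j' => x (i0, j') := by
      rw [Fintype.sum_prod_type, Finset.mul_sum]
      refine Finset.sum_congr rfl fun c _ => ?_
      by_cases hc : w i0 c = 0
      · simp [hw'def, wNext, hc]
      · have hme : (∑ β : Bool, (stepW (z i0) j b (s i0 c) β).1 *
            effD (z i0) ((stepW (z i0) j b (s i0 c) β).2) fun j' => x (i0, j'))
            = if x (i0, j) = b then effD (z i0) (s i0 c) fun j' => x (i0, j') else 0 := by
          simpa using stepW_eff (hg i0 c hc) fun j' => x (i0, j')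
        have hexp : ∀ β : Bool, w' i0 (c, β) = w i0 c * (stepW (z i0) j b (s i0 c) β).1 := by
          intro β
          simp [hw'def, wNext, hc]
        have hexps : ∀ β : Bool, s' i0 (c, β) = (stepW (z i0) j b (s i0 c) β).2 := by
          intro β
          simp [hs'def, sNext]
        calc (∑ β : Bool, w' i0 (c, β) * effD (z i0) (s' i0 (c, β)) fun j' => x (i0, j'))
            = ∑ β : Bool, w i0 c * ((stepW (z i0) j b (s i0 c) β).1 *
                effD (z i0) ((stepW (z i0) j b (s i0 c) β).2) fun j' => x (i0, j') ) := by
              refine Finset.sum_congr rfl fun β _ => ?_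
              rw [hexp β, hexps β, mul_assoc]
          _ = w i0 c * (if x (i0, j) = b then effD (z i0) (s i0 c) fun j' => x (i0, j') else 0) := by
              rw [← Finset.mul_sum, hme]
          _ = (if x (i0, j) = b then (1:ℝ) else 0) *
                (w i0 c * effD (z i0) (s i0 c) fun j' => x (i0, j')) := by
              by_cases hxy : x (i0, j) = b <;> simp [hxy]
    rw [← Finset.mul_prod_erase Finset.univ
        (fun i => ∑ c : κ i × Bool, w' i c * effD (z i) (s' i c) fun j' => x (i, j'))
        (Finset.mem_univ i0),
      ← Finset.mul_prod_erase Finset.univ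
        (fun i => ∑ c, w i c * effD (z i) (s i c) fun j' => x (i, j'))
        (Finset.mem_univ i0),
      hD0, Finset.prod_congr rfl (fun i hi => hD i (Finset.ne_of_mem_erase hi)), hfol]
    ring

end SimAux4


/-- **Simulation theorem.** Let `B` be a deterministic decision tree on inputs
from `({0,1}^m)^t` and `Q` a consistent (finitely supported) distribution over pairs
`(μ0, μ1)` of distributions on `{0,1}^m`. For every `z ∈ {0,1}^t` and every node of `B`
(identified with the path `p` leading to it), the probability that the query process `P(B,Q)`
run on `z` reaches the node equals the probability that the computation of `B` on a random
input `x ∼ γ_z(Q)` reaches it. -/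
theorem simulation_theorem (t m kQ : ℕ) (S : Type) (B : DTree (Fin t × Fin m) S)
    (w : Fin kQ → ℝ) (M0 M1 : Fin kQ → ((Fin m → Bool) → ℝ))
    (hw : IsDist w) (hM : ∀ c, IsDist (M0 c) ∧ IsDist (M1 c))
    (hcons : ∀ c c' x, M0 c x ≠ 0 → M1 c' x = 0) :
    ∀ (z : Fin t → Bool) (p : List Bool),
      (∑ cv : Fin t → Fin kQ, (∏ i, w (cv i)) *
          procProb z p B (fun i => BState.unq (M0 (cv i)) (M1 (cv i)))) =
      ∑ x : Fin t × Fin m → Bool,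
        (∏ i : Fin t, ∑ c : Fin kQ, w c * (if z i then M1 c else M0 c) (fun j => x (i, j))) *
        (if followB p B x then 1 else 0) := by
  intro z p
  exact key z p B (fun _ => Fin kQ) (fun _ c => w c) (fun _ c => BState.unq (M0 c) (M1 c))
    (fun _ c => hw.1 c) (fun _ c _ => ⟨(hM c).1, (hM c).2⟩)
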